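/- In Λ⊕^cbv, if M →_{β_v} 𝔫 and M →_⊕ 𝔰, then there exists a multidistribution 𝔯 such that 𝔫 ⇒⊕ 𝔯 and 𝔰 ⇒_{β_v} 𝔯. Consequently the liftings ⇒_{β_v} and ⇒⊕ diamond-commute. -/

import Mathlib

open scoped NNReal ENNReal

/-- A (raw) multidistribution on `X`: a finite multiset of weighted elements. -/
abbrev MDist (X : Type) := Multiset (ℝ≥0 × X)

namespace MDist

/-- Scalar multiplication of a multidistribution. -/
def scale {X : Type} (p : ℝ≥0) (m : MDist X) : MDist X :=
  m.map fun q => (p * q.1, q.2)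

/-- The singleton multidistribution `[1 M]`. -/
def single {X : Type} (M : X) : MDist X := {(1, M)}

/-- A multidistribution is proper when every weight lies in `(0,1]` and the
weights sum to at most `1`. -/
def Proper {X : Type} (m : MDist X) : Prop :=
  (∀ q ∈ m, 0 < q.1 ∧ q.1 ≤ 1) ∧ (m.map Prod.fst).sum ≤ 1

/-- The probability that the distribution associated to a multidistribution
assigns to an event `A`. -/
noncomputable def mass {X : Type} (m : MDist X) (A : Set X) : ℝ≥0∞ :=
  (m.map fun q => A.indicator (fun _ => (q.1 : ℝ≥0∞)) q.2).sum

end MDist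

/-- One component of the lifting: either keep the term or perform a step. -/
def LiftTerm {X : Type} (r : X → MDist X → Prop) (M : X) (m : MDist X) : Prop :=
  m = MDist.single M ∨ r M m

/-- The lifting of a relation `r ⊆ X × MDist X` to a binary relation on
multidistributions. -/
inductive Lift {X : Type} (r : X → MDist X → Prop) : MDist X → MDist X → Prop
  | nil : Lift r 0 0
  | cons {p : ℝ≥0} {M : X} {m s t : MDist X} :
      LiftTerm r M m → Lift r s t → Lift r ((p, M) ::ₘ s) (MDist.scale p m + t)
/-- Terms of `Λ⊕` (de Bruijn representation). -/
inductive Term : Type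
  | var : ℕ → Term
  | lam : Term → Term
  | app : Term → Term → Term
  | choice : Term → Term → Term
deriving DecidableEq

namespace Term

/-- Shifting of de Bruijn indices above a cutoff. -/
def liftAux (c : ℕ) : Term → Term
  | var k => if k < c then var k else var (k + 1)
  | lam M => lam (liftAux (c + 1) M)
  | app M N => app (liftAux c M) (liftAux c N)
  | choice M N => choice (liftAux c M) (liftAux c N)

/-- Capture-avoiding substitution `M[N/j]`. -/
def subst : Term → ℕ → Term → Term
  | var k, j, N => if k = j then N else if j < k then var (k - 1) else var k
  | lam M, j, N => lam (subst M (j + 1) (liftAux 0 N))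
  | app M P, j, N => app (subst M j N) (subst P j N)
  | choice M P, j, N => choice (subst M j N) (subst P j N)

/-- Values: variables and abstractions. -/
inductive IsValue : Term → Prop
  | var (n : ℕ) : IsValue (var n)
  | lam (M : Term) : IsValue (lam M)

/-- `β_v`-reduction, closed under arbitrary contexts. -/
inductive BetaStep : Term → Term → Prop
  | beta {M V : Term} : IsValue V → BetaStep (app (lam M) V) (subst M 0 V)
  | appL {M M' N : Term} : BetaStep M M' → BetaStep (app M N) (app M' N)
  | appR {M N N' : Term} : BetaStep N N' → BetaStep (app M N) (app M N')
  | lam {M M' : Term} : BetaStep M M' → BetaStep (lam M) (lam M')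
  | chL {M M' N : Term} : BetaStep M M' → BetaStep (choice M N) (choice M' N)
  | chR {M N N' : Term} : BetaStep N N' → BetaStep (choice M N) (choice M N')

/-- Surface `β_v`-reduction: closure under surface contexts `S ::= □ | MS | SM`. -/
inductive SurfBetaStep : Term → Term → Prop
  | beta {M V : Term} : IsValue V → SurfBetaStep (app (lam M) V) (subst M 0 V)
  | appL {M M' N : Term} : SurfBetaStep M M' → SurfBetaStep (app M N) (app M' N)
  | appR {M N N' : Term} : SurfBetaStep N N' → SurfBetaStep (app M N) (app M N')

/-- `PlusStep M A B` holds when `M = S(P ⊕ Q)`, `A = S(P)`, `B = S(Q)` for a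
surface context `S ::= □ | MS | SM`. -/
inductive PlusStep : Term → Term → Term → Prop
  | choice {M N : Term} : PlusStep (choice M N) M N
  | appL {M A B N : Term} : PlusStep M A B → PlusStep (app M N) (app A N) (app B N)
  | appR {M N A B : Term} : PlusStep N A B → PlusStep (app M N) (app M A) (app M B)

end Term

open Term

/-- The reduction `→_{β_v} ⊆ Λ⊕ × MDST(Λ⊕)`. -/
def betaRed (M : Term) (m : MDist Term) : Prop :=
  ∃ N, BetaStep M N ∧ m = MDist.single N

/-- The probabilistic reduction `→_⊕ ⊆ Λ⊕ × MDST(Λ⊕)`. -/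
def plusRed (M : Term) (m : MDist Term) : Prop :=
  ∃ A B, PlusStep M A B ∧ m = {((1 : ℝ≥0) / 2, A), ((1 : ℝ≥0) / 2, B)}

/-- The full reduction `→ = →_{β_v} ∪ →_⊕`. -/
def red (M : Term) (m : MDist Term) : Prop := betaRed M m ∨ plusRed M m

/-- Surface reduction `→ₛ`: β_v and ⊕ rules closed under surface contexts. -/
def surfRed (M : Term) (m : MDist Term) : Prop :=
  (∃ N, SurfBetaStep M N ∧ m = MDist.single N) ∨ plusRed M m

/-- A step is deep when it is not a surface step. -/
def deepRed (M : Term) (m : MDist Term) : Prop := red M m ∧ ¬ surfRed M m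

/-! A ⊕-step fires only in a surface context, which never enters an abstraction, and a value
cannot ⊕-step; so the ⊕-redex never lies inside the contracted β_v-redex. Hence the β_v-step
either happens in one branch of the ⊕-redex, or lies in a disjoint position and can be
performed in both branches; either way the two sides meet after at most one further step each.
Liftings to multidistributions are joined componentwise, as they are closed under sums and
scaling. -/

namespace MDist

variable {X : Type}

lemma scale_cons (p q : ℝ≥0) (M : X) (m : MDist X) :
    scale p ((q, M) ::ₘ m) = (p * q, M) ::ₘ scale p m :=
  Multiset.map_cons _ _ _

lemma scale_add (p : ℝ≥0) (m n : MDist X) : scale p (m + n) = scale p m + scale p n :=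
  Multiset.map_add _ _ _

lemma scale_scale (p q : ℝ≥0) (m : MDist X) : scale p (scale q m) = scale (p * q) m := by
  simp [scale, Multiset.map_map, mul_assoc]

lemma scale_single (p : ℝ≥0) (M : X) : scale p (single M) = {(p, M)} := by
  simp [scale, single]

end MDist

namespace Lift

variable {X : Type} {r s : X → MDist X → Prop}

protected lemma refl (m : MDist X) : Lift r m m := by
  induction m using Multiset.induction with
  | empty => exact nil
  | cons a t ih =>
    simpa [MDist.scale_single, Multiset.singleton_add] using cons (p := a.1) (Or.inl rfl) ih

lemma cons_single {p : ℝ≥0} {M N : X} {s t : MDist X} (hM : LiftTerm r M (MDist.single N))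
    (hs : Lift r s t) : Lift r ((p, M) ::ₘ s) ((p, N) ::ₘ t) := by
  simpa [MDist.scale_single, Multiset.singleton_add] using cons (p := p) hM hs

lemma of_liftTerm {M : X} {m : MDist X} (h : LiftTerm r M m) : Lift r (MDist.single M) m := by
  simpa [MDist.single, MDist.scale, Prod.map] using cons (p := 1) (s := 0) (t := 0) h nil

protected lemma add {a b c d : MDist X} (hab : Lift r a b) (hcd : Lift r c d) :
    Lift r (a + c) (b + d) := by
  induction hab with
  | nil => simpa using hcd
  | cons hM _ ih => simpa [Multiset.cons_add, add_assoc] using cons hM ih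

protected lemma scale (p : ℝ≥0) {a b : MDist X} (h : Lift r a b) :
    Lift r (MDist.scale p a) (MDist.scale p b) := by
  induction h with
  | nil => exact nil
  | @cons q _ _ _ _ hM _ ih =>
    simpa [MDist.scale_cons, MDist.scale_add, MDist.scale_scale] using cons (p := p * q) hM ih

lemma eq_zero_of_eq_zero {m n : MDist X} (h : Lift r m n) (hm : m = 0) : n = 0 := by
  cases h with
  | nil => rfl
  | cons _ _ => exact absurd hm Multiset.cons_ne_zero

lemma exists_of_cons {m n : MDist X} (h : Lift r m n) {p : ℝ≥0} {M : X} {t : MDist X}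
    (hm : m = (p, M) ::ₘ t) :
    ∃ nM n', LiftTerm r M nM ∧ Lift r t n' ∧ n = MDist.scale p nM + n' := by
  induction h generalizing t with
  | nil => exact absurd hm.symm Multiset.cons_ne_zero
  | @cons q P mP s n' hP hs ih =>
    rcases Multiset.cons_eq_cons.mp hm.symm with ⟨hqP, rfl⟩ | ⟨_, u, rfl, hsu⟩
    · obtain ⟨rfl, rfl⟩ := Prod.mk.inj hqP
      exact ⟨mP, n', hP, hs, rfl⟩
    · obtain ⟨nM, n'', hM, hu, rfl⟩ := ih hsu
      exact ⟨nM, MDist.scale q mP + n'', hM, cons hP hu, add_left_comm _ _ _⟩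

theorem diamond
    (h : ∀ M n t, LiftTerm r M n → LiftTerm s M t → ∃ u, Lift s n u ∧ Lift r t u)
    {m n t : MDist X} (hn : Lift r m n) (ht : Lift s m t) :
    ∃ u, Lift s n u ∧ Lift r t u := by
  induction hn generalizing t with
  | nil => exact ⟨0, nil, by rw [eq_zero_of_eq_zero ht rfl]; exact nil⟩
  | @cons p M nM m₀ n₀ hM _ ih =>
    obtain ⟨tM, t₀, htM, ht₀, rfl⟩ := exists_of_cons ht rfl
    obtain ⟨uM, hnuM, htuM⟩ := h M nM tM hM htM
    obtain ⟨u₀, hnu₀, htu₀⟩ := ih ht₀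
    exact ⟨MDist.scale p uM + u₀, (hnuM.scale p).add hnu₀, (htuM.scale p).add htu₀⟩

end Lift

lemma LiftTerm.diamond {X : Type} {r s : X → MDist X → Prop}
    (h : ∀ M n t, r M n → s M t → ∃ u, Lift s n u ∧ Lift r t u)
    {M : X} {n t : MDist X} (hn : LiftTerm r M n) (ht : LiftTerm s M t) :
    ∃ u, Lift s n u ∧ Lift r t u := by
  rcases hn with rfl | hn
  · exact ⟨t, Lift.of_liftTerm ht, Lift.refl t⟩
  rcases ht with rfl | ht
  · exact ⟨n, Lift.refl n, Lift.of_liftTerm (Or.inr hn)⟩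
  exact h M n t hn ht

lemma Relation.ReflGen.lift {α β : Type*} {r : α → α → Prop} {p : β → β → Prop}
    {a b : α} (f : α → β) (hf : ∀ a b, r a b → p (f a) (f b)) (h : ReflGen r a b) :
    ReflGen p (f a) (f b) := by
  cases h with
  | refl => exact .refl
  | single hab => exact .single (hf a b hab)

namespace Term

open Relation

lemma IsValue.not_plusStep {V A B : Term} (hV : IsValue V) : ¬ PlusStep V A B := by
  intro hp
  cases hV <;> cases hp

lemma BetaStep.exists_plusStep {M N A B : Term} (hβ : BetaStep M N) (hp : PlusStep M A B) :
    ∃ A' B', PlusStep N A' B' ∧ ReflGen BetaStep A A' ∧ ReflGen BetaStep B B' := by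
  induction hp generalizing N with
  | choice =>
    cases hβ with
    | chL h => exact ⟨_, _, .choice, .single h, .refl⟩
    | chR h => exact ⟨_, _, .choice, .refl, .single h⟩
  | appL hp ih =>
    cases hβ with
    | beta _ => exact ((IsValue.lam _).not_plusStep hp).elim
    | appL h =>
      obtain ⟨A', B', hp', hA, hB⟩ := ih h
      exact ⟨_, _, .appL hp', hA.lift (app · _) fun _ _ => .appL,
        hB.lift (app · _) fun _ _ => .appL⟩
    | appR h => exact ⟨_, _, .appL hp, .single (.appR h), .single (.appR h)⟩
  | appR hp ih =>
    cases hβ with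
    | beta hV => exact (hV.not_plusStep hp).elim
    | appL h => exact ⟨_, _, .appR hp, .single (.appL h), .single (.appL h)⟩
    | appR h =>
      obtain ⟨A', B', hp', hA, hB⟩ := ih h
      exact ⟨_, _, .appR hp', hA.lift (app _) fun _ _ => .appR,
        hB.lift (app _) fun _ _ => .appR⟩

end Term

open Relation in
lemma liftTerm_betaRed_of_reflGen {M N : Term} (h : ReflGen BetaStep M N) :
    LiftTerm betaRed M (MDist.single N) := by
  cases h with
  | refl => exact Or.inl rfl
  | single h => exact Or.inr ⟨N, h, rfl⟩

lemma betaRed_plusRed_join (M : Term) (n s : MDist Term) (hn : betaRed M n)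
    (hs : plusRed M s) :
    ∃ r, Lift plusRed n r ∧ Lift betaRed s r := by
  obtain ⟨N, hβ, rfl⟩ := hn
  obtain ⟨A, B, hp, rfl⟩ := hs
  obtain ⟨A', B', hp', hA, hB⟩ := hβ.exists_plusStep hp
  refine ⟨{(1 / 2, A'), (1 / 2, B')}, Lift.of_liftTerm (Or.inr ⟨A', B', hp', rfl⟩), ?_⟩
  exact Lift.cons_single (liftTerm_betaRed_of_reflGen hA) <|
    Lift.cons_single (s := 0) (liftTerm_betaRed_of_reflGen hB) Lift.nil

/-- In `Λ⊕^cbv`, a β_v-step and a ⊕-step from the same term can be joined, and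
consequently the liftings `⇒_{β_v}` and `⇒⊕` diamond-commute. -/
theorem beta_plus_diamond_commute :
    (∀ (M : Term) (n s : MDist Term), betaRed M n → plusRed M s →
      ∃ r, Lift plusRed n r ∧ Lift betaRed s r) ∧
    (∀ m n s : MDist Term, Lift betaRed m n → Lift plusRed m s →
      ∃ r, Lift plusRed n r ∧ Lift betaRed s r) :=
  ⟨betaRed_plusRed_join, fun _ _ _ =>
    Lift.diamond fun _ _ _ => LiftTerm.diamond betaRed_plusRed_join⟩
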